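/- arXiv:quant-ph/0507231 — 18 statements merged into one kernel-verified Lean document; each statement's English description precedes it below -/
import Mathlib

section
/- In any M-algebra (X, M) with M nonempty, there exist measurements ⊤, ⊥ ∈ M such that ⊤(x) = x for every x ∈ X and ⊥(x) = 0 for every x ∈ X. -/
/-- `α` preserves `β`: `α` maps the fixpoints of `β` into the fixpoints of `β`. -/
def Preserves {X : Type*} (α β : X → X) : Prop :=
  ∀ x, β x = x → β (α x) = α x

/-- `ν` is a negation of `α`: `FP ν = Z α` and `Z ν = FP α`. -/
def IsNegation {X : Type*} [Zero X] (ν α : X → X) : Prop :=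
  (∀ x, ν x = x ↔ α x = 0) ∧ (∀ x, ν x = 0 ↔ α x = x)

/-- Two maps commute. -/
def Commutes {X : Type*} (α β : X → X) : Prop :=
  ∀ x, α (β x) = β (α x)

/-- An M-algebra on a type `X` with a distinguished illegitimate state `0`. -/
structure MAlgebra (X : Type*) [Zero X] where
  M : Set (X → X)
  illegitimate : ∀ α ∈ M, α 0 = 0
  idempotence : ∀ α ∈ M, ∀ x : X, α (α x) = α x
  composition : ∀ α ∈ M, ∀ β ∈ M, Preserves α β → (fun x => α (β x)) ∈ M
  interference : ∀ α ∈ M, ∀ β ∈ M, ∀ x : X,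
    α x = x → β (α (β x)) = α (β x) → α (β x) = β x
  cumulativity : ∀ α ∈ M, ∀ β ∈ M, ∀ x : X,
    β (α x) = α x → α (β x) = β x → α x = β x
  negation : ∀ α ∈ M, ∃ ν ∈ M, IsNegation ν α

theorem malgebra_top_bot {X : Type*} [Zero X] (A : MAlgebra X) (hM : A.M.Nonempty) :
    (∃ t ∈ A.M, ∀ x : X, t x = x) ∧ (∃ b ∈ A.M, ∀ x : X, b x = 0) := by
  obtain ⟨α, hα⟩ := hM
  obtain ⟨ν, hν, hν1, hν2⟩ := A.negation α hα
  -- α preserves ν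
  have hpres : Preserves α ν := by
    intro x hx
    have hαx : α x = 0 := (hν1 x).mp hx
    rw [hαx, A.illegitimate ν hν]
  have hb : (fun x => α (ν x)) ∈ A.M := A.composition α hα ν hν hpres
  have hbzero : ∀ x : X, α (ν x) = 0 := by
    intro x
    exact (hν1 (ν x)).mp (A.idempotence ν hν x)
  obtain ⟨τ, hτ, hτ1, _⟩ := A.negation _ hb
  constructor
  · exact ⟨τ, hτ, fun x => (hτ1 x).mpr (hbzero x)⟩
  · exact ⟨_, hb, hbzero⟩
end

section
/- In any M-algebra (X, M), if ν ∈ M is a negation of α ∈ M and μ ∈ M is a negation of ν, then μ = α (double negation: ¬¬α = α). -/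
theorem malgebra_double_negation {X : Type*} [Zero X] (A : MAlgebra X)
    {α ν μ : X → X} (hα : α ∈ A.M) (hν : ν ∈ A.M) (hμ : μ ∈ A.M)
    (hνneg : IsNegation ν α) (hμneg : IsNegation μ ν) : μ = α := by
  -- FP μ = Z ν = FP α
  have fp : ∀ x, μ x = x ↔ α x = x := by
    intro x
    rw [(hμneg.1 x), (hνneg.2 x)]
  funext x
  exact A.cumulativity μ hμ α hα x
    ((fp (μ x)).1 (A.idempotence μ hμ x))
    ((fp (α x)).2 (A.idempotence α hα x))
end

section
/- In any M-algebra (X, M), for all α, β ∈ M and x ∈ X: if β(x) = x and β(α(x)) = 0, then α(x) = 0. (A measurement acting on a state in which β holds can never produce a state in which β is impossible, unless it produces the illegitimate state.) -/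
theorem malgebra_no_jump_to_zero {X : Type*} [Zero X] (A : MAlgebra X)
    {α β : X → X} (hα : α ∈ A.M) (hβ : β ∈ A.M) (x : X)
    (h1 : β x = x) (h2 : β (α x) = 0) : α x = 0 := by
  have := A.interference β hβ α hα x h1 (by rw [h2]; exact A.illegitimate α hα)
  rw [h2] at this
  exact this.symm
end

section
/- In any M-algebra (X, M), for all α, β ∈ M: FP(α) ⊆ FP(β) if and only if Z(β) ⊆ Z(α). -/
lemma malgebra_forward {X : Type*} [Zero X] (A : MAlgebra X)
    {α β : X → X} (hα : α ∈ A.M) (hβ : β ∈ A.M)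
    (h : {x : X | α x = x} ⊆ {x : X | β x = x}) :
    {x : X | β x = 0} ⊆ {x : X | α x = 0} := by
  intro x hx
  simp only [Set.mem_setOf_eq] at hx ⊢
  obtain ⟨ν, hν, hν1, hν2⟩ := A.negation β hβ
  have hfix : ν x = x := (hν1 x).mpr hx
  have hβα : β (α x) = α x := h (A.idempotence α hα x)
  have hνα : ν (α x) = 0 := (hν2 (α x)).mpr hβα
  have := A.interference ν hν α hα x hfix (by rw [hνα, A.illegitimate α hα])
  rw [hνα] at this
  exact this.symm

theorem malgebra_FP_subset_iff_Z_subset {X : Type*} [Zero X] (A : MAlgebra X)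
    {α β : X → X} (hα : α ∈ A.M) (hβ : β ∈ A.M) :
    {x : X | α x = x} ⊆ {x : X | β x = x} ↔ {x : X | β x = 0} ⊆ {x : X | α x = 0} := by
  constructor
  · exact malgebra_forward A hα hβ
  · intro h
    obtain ⟨να, hνα, hνα1, hνα2⟩ := A.negation α hα
    obtain ⟨νβ, hνβ, hνβ1, hνβ2⟩ := A.negation β hβ
    have hsub : {x : X | νβ x = x} ⊆ {x : X | να x = x} := by
      intro x hx
      exact (hνα1 x).mpr (h ((hνβ1 x).mp hx))
    have := malgebra_forward A hνβ hνα hsub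
    intro x hx
    exact (hνβ2 x).mp (this ((hνα2 x).mpr hx))
end

section
/- In any M-algebra (X, M), for all α, β ∈ M: α preserves β if and only if β preserves α. -/
theorem malgebra_preserves_symm {X : Type*} [Zero X] (A : MAlgebra X)
    {α β : X → X} (hα : α ∈ A.M) (hβ : β ∈ A.M) :
    Preserves α β ↔ Preserves β α := by
  have key : ∀ γ ∈ A.M, ∀ δ ∈ A.M, Preserves γ δ → Preserves δ γ := by
    intro γ hγ δ hδ h x hx
    exact A.interference γ hγ δ hδ x hx (h (δ x) (A.idempotence δ hδ x))
  exact ⟨key α hα β hβ, key β hβ α hα⟩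
end

section
/- In any M-algebra (X, M), for all α, β ∈ M: if the composite map γ : x ↦ β(α(x)) (first α, then β) belongs to M, then FP(γ) = FP(α) ∩ FP(β). -/
/-
If `β (α x) = x`, let `ν` be a negation of `α`. Since `ν x` is a fixpoint of `ν`, it is a zero of `α`,
so the composite `γ = β ∘ α` sends `ν x` to `β 0 = 0`, a fixpoint of `ν`. Interference (with `γ`
fixing `x`) then forces `ν x = γ (ν x) = 0`, i.e. `x` is a fixpoint of `α`, and then also of `β`.
-/

namespace MAlgebra

variable {X : Type*} [Zero X] (A : MAlgebra X)

theorem apply_eq_zero_of_apply_apply_eq_zero {γ ν : X → X} (hγ : γ ∈ A.M) (hν : ν ∈ A.M)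
    {x : X} (hx : γ x = x) (h : γ (ν x) = 0) : ν x = 0 := by
  have hfix : γ (ν x) = ν x :=
    A.interference γ hγ ν hν x hx (by rw [h, A.illegitimate ν hν])
  rw [← hfix, h]

theorem apply_negation_eq_zero {α ν : X → X} (hν : ν ∈ A.M) (hneg : IsNegation ν α) (x : X) :
    α (ν x) = 0 :=
  (hneg.1 (ν x)).mp (A.idempotence ν hν x)

theorem fixed_left_of_fixed_comp {α β : X → X} (hα : α ∈ A.M) (hβ : β ∈ A.M)
    (hcomp : (fun x => β (α x)) ∈ A.M) {x : X} (hx : β (α x) = x) : α x = x := by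
  obtain ⟨ν, hν, hneg⟩ := A.negation α hα
  have hkill : β (α (ν x)) = 0 := by
    rw [A.apply_negation_eq_zero hν hneg, A.illegitimate β hβ]
  exact (hneg.2 x).mp (A.apply_eq_zero_of_apply_apply_eq_zero hcomp hν hx hkill)

end MAlgebra

theorem malgebra_comp_fixpoints {X : Type*} [Zero X] (A : MAlgebra X)
    {α β : X → X} (hα : α ∈ A.M) (hβ : β ∈ A.M)
    (hcomp : (fun x => β (α x)) ∈ A.M) :
    {x : X | β (α x) = x} = {x : X | α x = x} ∩ {x : X | β x = x} := by
  ext x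
  simp only [Set.mem_ofPred_eq, Set.mem_inter_iff]
  constructor
  · intro hx
    have hαx : α x = x := A.fixed_left_of_fixed_comp hα hβ hcomp hx
    exact ⟨hαx, by rwa [hαx] at hx⟩
  · rintro ⟨hαx, hβx⟩
    rw [hαx, hβx]
end

section
/- In any M-algebra (X, M), for all α, β ∈ M: the composite map x ↦ β(α(x)) (first α, then β) belongs to M if and only if β preserves α. -/
theorem malgebra_comp_mem_iff_preserves {X : Type*} [Zero X] (A : MAlgebra X)
    {α β : X → X} (hα : α ∈ A.M) (hβ : β ∈ A.M) :
    (fun x => β (α x)) ∈ A.M ↔ Preserves β α := by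
  constructor
  · intro hc x hx
    set γ : X → X := fun x => β (α x) with hγ
    -- γ (β x) = β x, from idempotence of γ at x
    have hγy : γ (γ x) = γ x := A.idempotence γ hc x
    have hgx : γ x = β x := by simp [hγ, hx]
    have hfix : γ (β x) = β x := by rw [← hgx]; exact hγy
    -- ν : negation of α
    obtain ⟨ν, hνM, hν1, hν2⟩ := A.negation α hα
    set y := β x with hy
    -- α (ν y) = 0
    have hνν : ν (ν y) = ν y := A.idempotence ν hνM y
    have hανy : α (ν y) = 0 := (hν1 (ν y)).mp hνν
    -- γ (ν y) = 0
    have hγνy : γ (ν y) = 0 := by simp [hγ, hανy, A.illegitimate β hβ]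
    -- ν 0 = 0
    have hν0 : ν 0 = 0 := (hν2 0).mpr (A.illegitimate α hα)
    -- interference of γ and ν at y
    have hint : γ (ν y) = ν y :=
      A.interference γ hc ν hνM y hfix (by rw [hγνy, hν0])
    have hνy0 : ν y = 0 := by rw [← hint, hγνy]
    exact (hν2 y).mp hνy0
  · intro h
    exact A.composition β hβ α hα h
end

section
/- In any M-algebra (X, M), for all α, β ∈ M: the composite map x ↦ β(α(x)) belongs to M if and only if the composite map x ↦ α(β(x)) belongs to M. -/
lemma malgebra_aux {X : Type*} [Zero X] (A : MAlgebra X)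
    {α β : X → X} (hα : α ∈ A.M) (hβ : β ∈ A.M)
    (hγ : (fun x => β (α x)) ∈ A.M) : (fun x => α (β x)) ∈ A.M := by
  obtain ⟨ν, hν, hν1, hν2⟩ := A.negation α hα
  -- every fixpoint of β ∘ α is a fixpoint of α
  have hfix : ∀ u, β (α u) = u → α u = u := by
    intro u hu
    have h1 : α (ν u) = 0 := (hν1 _).mp (A.idempotence ν hν u)
    have h2 : ν (β (α (ν u))) = β (α (ν u)) := by
      rw [h1, A.illegitimate β hβ, A.illegitimate ν hν]
    have h3 : β (α (ν u)) = ν u := A.interference _ hγ ν hν u hu h2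
    have h4 : ν u = 0 := by rw [← h3, h1, A.illegitimate β hβ]
    exact (hν2 u).mp h4
  have hpres : Preserves α β := by
    intro x hx
    have hy : β (α (β (α x))) = β (α x) := A.idempotence _ hγ x
    exact A.interference β hβ α hα x hx (hfix _ hy)
  exact A.composition α hα β hβ hpres

theorem malgebra_comp_mem_iff_comp_mem {X : Type*} [Zero X] (A : MAlgebra X)
    {α β : X → X} (hα : α ∈ A.M) (hβ : β ∈ A.M) :
    (fun x => β (α x)) ∈ A.M ↔ (fun x => α (β x)) ∈ A.M :=
  ⟨malgebra_aux A hα hβ, malgebra_aux A hβ hα⟩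
end

section
/- In any M-algebra (X, M), for all α, β ∈ M: the composite map x ↦ β(α(x)) belongs to M if and only if α and β commute, i.e., α(β(x)) = β(α(x)) for all x ∈ X. -/
/-- If the composite `β ∘ α` belongs to `M`, then `α` fixes every value of the composite. -/
lemma malgebra_fix_aux {X : Type*} [Zero X] (A : MAlgebra X)
    {α β : X → X} (hα : α ∈ A.M) (hβ : β ∈ A.M)
    (hγ : (fun x => β (α x)) ∈ A.M) :
    ∀ x : X, α (β (α x)) = β (α x) := by
  obtain ⟨ν, hν, hν1, hν2⟩ := A.negation α hα
  -- α kills every value of ν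
  have hνz : ∀ x, α (ν x) = 0 := fun x => (hν1 (ν x)).1 (A.idempotence ν hν x)
  -- fixpoints of the composite are fixpoints of α
  have claim2 : ∀ x : X, β (α x) = x → α x = x := by
    intro x hx
    have hz : β (α (ν x)) = 0 := by rw [hνz x, A.illegitimate β hβ]
    have h2 : ν (β (α (ν x))) = β (α (ν x)) := by
      rw [hz, A.illegitimate ν hν]
    have := A.interference (fun x => β (α x)) hγ ν hν x hx h2
    -- this : β (α (ν x)) = ν x, so ν x = 0
    have hν0 : ν x = 0 := by rw [← this]; exact hz
    exact (hν2 x).1 hν0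
  intro x
  exact claim2 (β (α x)) (A.idempotence (fun x => β (α x)) hγ x)

theorem malgebra_comp_mem_iff_commutes {X : Type*} [Zero X] (A : MAlgebra X)
    {α β : X → X} (hα : α ∈ A.M) (hβ : β ∈ A.M) :
    (fun x => β (α x)) ∈ A.M ↔ ∀ x : X, α (β x) = β (α x) := by
  constructor
  · intro hγ
    have L1 := malgebra_fix_aux A hα hβ hγ
    have pres : Preserves α β := fun y hy =>
      A.interference β hβ α hα y hy (L1 y)
    have hδ : (fun x => α (β x)) ∈ A.M := A.composition α hα β hβ pres
    have L2 := malgebra_fix_aux A hβ hα hδ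
    intro x
    have h1 : β (α (α (β x))) = α (β x) := by
      rw [A.idempotence α hα (β x)]; exact L2 x
    have h2 : α (β (β (α x))) = β (α x) := by
      rw [A.idempotence β hβ (α x)]; exact L1 x
    exact A.cumulativity (fun x => α (β x)) hδ (fun x => β (α x)) hγ x h1 h2
  · intro hc
    exact A.composition β hβ α hα (fun x hx => by rw [hc x, hx])
end

section
/- In any M-algebra (X, M), for all α, β ∈ M with FP(α) ⊆ FP(β): for every x ∈ X one has β(α(x)) = α(x) and α(β(x)) = α(x); in particular α and β commute. -/
theorem malgebra_FP_subset_comp {X : Type*} [Zero X] (A : MAlgebra X)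
    {α β : X → X} (hα : α ∈ A.M) (hβ : β ∈ A.M)
    (h : {x : X | α x = x} ⊆ {x : X | β x = x}) :
    (∀ x : X, β (α x) = α x) ∧ (∀ x : X, α (β x) = α x) ∧ Commutes α β := by
  have part1 : ∀ x : X, β (α x) = α x := fun x => h (A.idempotence α hα x)
  have hγ : (fun x => α (β x)) ∈ A.M :=
    A.composition α hα β hβ (fun x _ => part1 x)
  have part2 : ∀ x : X, α (β x) = α x := by
    intro x
    have h1 : (fun x => α (β x)) (α x) = α x := by
      show α (β (α x)) = α x
      rw [part1 x, A.idempotence α hα x]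
    have h2 : α ((fun x => α (β x)) x) = (fun x => α (β x)) x := by
      show α (α (β x)) = α (β x)
      exact A.idempotence α hα (β x)
    exact (A.cumulativity α hα _ hγ x h1 h2).symm
  exact ⟨part1, part2, fun x => (part2 x).trans (part1 x).symm⟩
end

section
/- In any M-algebra (X, M), if α, β ∈ M commute and ν ∈ M is a negation of α, then ν and β commute. -/
theorem malgebra_negation_commutes {X : Type*} [Zero X] (A : MAlgebra X)
    {α β ν : X → X} (hα : α ∈ A.M) (hβ : β ∈ A.M) (hν : ν ∈ A.M)
    (hcomm : Commutes α β) (hneg : IsNegation ν α) : Commutes ν β := by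
  -- β maps fixpoints of ν to fixpoints of ν
  have hνfix : ∀ y, ν y = y → ν (β y) = β y := by
    intro y hy
    have h0 : α y = 0 := (hneg.1 y).mp hy
    have : α (β y) = 0 := by rw [hcomm y, h0, A.illegitimate β hβ]
    exact (hneg.1 (β y)).mpr this
  -- ν preserves β (via interference)
  have hpres : Preserves ν β := by
    intro y hy
    exact A.interference β hβ ν hν y hy (hνfix (ν y) (A.idempotence ν hν y))
  have hm : (fun x => ν (β x)) ∈ A.M := A.composition ν hν β hβ hpres
  have hg : (fun x => β (ν x)) ∈ A.M := A.composition β hβ ν hν hνfix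
  intro x
  have h1 : β (ν (ν (β x))) = ν (β x) := by
    rw [A.idempotence ν hν (β x)]
    exact hpres (β x) (A.idempotence β hβ x)
  have h2 : ν (β (β (ν x))) = β (ν x) := by
    rw [A.idempotence β hβ (ν x)]
    exact hνfix (ν x) (A.idempotence ν hν x)
  exact A.cumulativity _ hm _ hg x h1 h2
end

section
/- In any M-algebra (X, M), if α, β ∈ M commute, then the composite map γ : x ↦ β(α(x)) belongs to M, satisfies FP(γ) = FP(α) ∩ FP(β), and is the unique element of M whose fixpoint set equals FP(α) ∩ FP(β). -/
theorem malgebra_conjunction {X : Type*} [Zero X] (A : MAlgebra X)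
    {α β : X → X} (hα : α ∈ A.M) (hβ : β ∈ A.M) (hcomm : Commutes α β) :
    (fun x => β (α x)) ∈ A.M ∧
    {x : X | β (α x) = x} = {x : X | α x = x} ∩ {x : X | β x = x} ∧
    ∀ γ ∈ A.M, {x : X | γ x = x} = {x : X | α x = x} ∩ {x : X | β x = x} →
      γ = fun x => β (α x) := by

  have hmem : (fun x => β (α x)) ∈ A.M := by
    apply A.composition β hβ α hα
    intro x hx
    calc α (β x) = β (α x) := hcomm x
    _ = β x := by rw [hx]
  have hFP : {x : X | β (α x) = x} = {x : X | α x = x} ∩ {x : X | β x = x} := by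
    ext x
    simp only [Set.mem_setOf_eq, Set.mem_inter_iff]
    constructor
    · intro h
      have hax : α x = x := by
        calc α x = α (β (α x)) := by rw [h]
        _ = β (α (α x)) := hcomm _
        _ = β (α x) := by rw [A.idempotence α hα x]
        _ = x := h
      have hbx : β x = x := by rw [hax] at h; exact h
      exact ⟨hax, hbx⟩
    · rintro ⟨h1, h2⟩
      rw [h1, h2]
  refine ⟨hmem, hFP, ?_⟩
  intro γ hγ hset
  have hfix : ∀ x, γ x = x ↔ β (α x) = x := by
    intro x
    have := Set.ext_iff.mp (hset.trans hFP.symm) x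
    simpa using this
  funext x
  have hδδ : β (α (β (α x))) = β (α x) := by
    calc β (α (β (α x))) = β (β (α (α x))) := by rw [hcomm]
    _ = β (β (α x)) := by rw [A.idempotence α hα x]
    _ = β (α x) := A.idempotence β hβ _
  have h1 : γ (β (α x)) = β (α x) := (hfix _).mpr hδδ
  have hγγ : γ (γ x) = γ x := A.idempotence γ hγ x
  have h2 : β (α (γ x)) = γ x := (hfix _).mp hγγ
  exact A.cumulativity γ hγ _ hmem x h2 h1
end

section
/- In any M-algebra (X, M), suppose α, β ∈ M commute, ν_α ∈ M is a negation of α, ν_β ∈ M is a negation of β, and μ ∈ M is a negation of the composite map x ↦ ν_β(ν_α(x)) (which belongs to M). Then Z(μ) = Z(α) ∩ Z(β), and μ is the unique element of M whose zero set equals Z(α) ∩ Z(β). (μ is the disjunction α ∨ β.) -/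
/-! The zero set of `α` is stable under `νβ`: apply interference to `να` and the measurement
`α ∘ νβ` at a zero `t` of `α`. Hence `νβ ∘ να` is a measurement whose fixpoints are the common
zeros of `α` and `β`, and a measurement is determined by its zero set, because its negations
share their fixpoints and cumulativity identifies measurements with the same fixpoints. -/

theorem Commutes.preserves_of_isNegation {X : Type*} [Zero X] {α β ν : X → X}
    (hcomm : Commutes α β) (hα0 : α 0 = 0) (hν : IsNegation ν β) : Preserves α ν := by
  intro x hx
  rw [hν.1, ← hcomm, (hν.1 x).mp hx, hα0]

namespace MAlgebra

variable {X : Type*} [Zero X] (A : MAlgebra X)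

theorem eq_of_fixedPoints_iff {γ δ : X → X} (hγ : γ ∈ A.M) (hδ : δ ∈ A.M)
    (h : ∀ x, γ x = x ↔ δ x = x) : γ = δ :=
  funext fun x => A.cumulativity γ hγ δ hδ x
    ((h (γ x)).mp (A.idempotence γ hγ x)) ((h (δ x)).mpr (A.idempotence δ hδ x))

theorem eq_of_zeros_iff {γ δ : X → X} (hγ : γ ∈ A.M) (hδ : δ ∈ A.M)
    (h : ∀ x, γ x = 0 ↔ δ x = 0) : γ = δ := by
  obtain ⟨νγ, hνγ, hnegγ⟩ := A.negation γ hγ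
  obtain ⟨νδ, hνδ, hnegδ⟩ := A.negation δ hδ
  have hν : νγ = νδ := A.eq_of_fixedPoints_iff hνγ hνδ fun x => by
    rw [hnegγ.1, hnegδ.1, h]
  exact A.eq_of_fixedPoints_iff hγ hδ fun x => by rw [← hnegγ.2, ← hnegδ.2, hν]

variable {α β να νβ : X → X} (hα : α ∈ A.M) (hνα : να ∈ A.M) (hνβ : νβ ∈ A.M)
  (hcomm : Commutes α β) (hnegα : IsNegation να α) (hnegβ : IsNegation νβ β)
include hα hνα hνβ hcomm hnegα hnegβ

theorem apply_negation_eq_zero_of_commutes {t : X} (ht : α t = 0) : α (νβ t) = 0 := by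
  have hmem : (fun x => α (νβ x)) ∈ A.M :=
    A.composition α hα νβ hνβ (hcomm.preserves_of_isNegation (A.illegitimate α hα) hnegβ)
  have hzero : να (α (νβ t)) = 0 := (hnegα.2 _).mpr (A.idempotence α hα (νβ t))
  have hfix : α (νβ (να (α (νβ t)))) = να (α (νβ t)) := by
    rw [hzero, A.illegitimate νβ hνβ, A.illegitimate α hα]
  have := A.interference να hνα _ hmem t ((hnegα.1 t).mpr ht) hfix
  rwa [hzero, eq_comm] at this

theorem negation_comp_negation_mem : (fun x => νβ (να x)) ∈ A.M :=
  A.composition νβ hνβ να hνα fun x hx =>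
    (hnegα.1 _).mpr
      (A.apply_negation_eq_zero_of_commutes hα hνα hνβ hcomm hnegα hnegβ ((hnegα.1 x).mp hx))

theorem negation_comp_negation_eq_self_iff (x : X) :
    νβ (να x) = x ↔ α x = 0 ∧ β x = 0 := by
  constructor
  · intro hx
    have hαx : α x = 0 := hx ▸ A.apply_negation_eq_zero_of_commutes hα hνα hνβ hcomm hnegα hnegβ
      (A.apply_negation_eq_zero hνα hnegα x)
    rw [(hnegα.1 x).mpr hαx] at hx
    exact ⟨hαx, (hnegβ.1 x).mp hx⟩
  · rintro ⟨hαx, hβx⟩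
    rw [(hnegα.1 x).mpr hαx, (hnegβ.1 x).mpr hβx]

end MAlgebra

theorem malgebra_disjunction_general {X : Type*} [Zero X] (A : MAlgebra X)
    {α β να νβ μ : X → X} (hα : α ∈ A.M)
    (hνα : να ∈ A.M) (hνβ : νβ ∈ A.M) (hμ : μ ∈ A.M)
    (hcomm : Commutes α β)
    (hnegα : IsNegation να α) (hnegβ : IsNegation νβ β)
    (hnegμ : IsNegation μ (fun x => νβ (να x))) :
    (fun x => νβ (να x)) ∈ A.M ∧
    {x : X | μ x = 0} = {x : X | α x = 0} ∩ {x : X | β x = 0} ∧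
    ∀ γ ∈ A.M, {x : X | γ x = 0} = {x : X | α x = 0} ∩ {x : X | β x = 0} → γ = μ := by
  have hzeros : {x : X | μ x = 0} = {x : X | α x = 0} ∩ {x : X | β x = 0} :=
    Set.ext fun x => (hnegμ.2 x).trans
      (A.negation_comp_negation_eq_self_iff hα hνα hνβ hcomm hnegα hnegβ x)
  refine ⟨A.negation_comp_negation_mem hα hνα hνβ hcomm hnegα hnegβ, hzeros, ?_⟩
  intro γ hγ hγzeros
  exact A.eq_of_zeros_iff hγ hμ fun x => Set.ext_iff.mp (hγzeros.trans hzeros.symm) x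

theorem malgebra_disjunction {X : Type*} [Zero X] (A : MAlgebra X)
    {α β να νβ μ : X → X} (hα : α ∈ A.M) (hβ : β ∈ A.M)
    (hνα : να ∈ A.M) (hνβ : νβ ∈ A.M) (hμ : μ ∈ A.M)
    (hcomm : Commutes α β)
    (hnegα : IsNegation να α) (hnegβ : IsNegation νβ β)
    (hnegμ : IsNegation μ (fun x => νβ (να x))) :
    (fun x => νβ (να x)) ∈ A.M ∧
    {x : X | μ x = 0} = {x : X | α x = 0} ∩ {x : X | β x = 0} ∧
    ∀ γ ∈ A.M, {x : X | γ x = 0} = {x : X | α x = 0} ∩ {x : X | β x = 0} → γ = μ :=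
  malgebra_disjunction_general A hα hνα hνβ hμ hcomm hnegα hnegβ hnegμ
end

section
/- In any M-algebra (X, M), if α, β ∈ M commute and γ ∈ M satisfies Z(γ) = Z(α) ∩ Z(β) (i.e., γ is the disjunction α ∨ β), then FP(α) ∪ FP(β) ⊆ FP(γ). -/
theorem malgebra_disjunction_fixpoints {X : Type*} [Zero X] (A : MAlgebra X)
    {α β γ : X → X} (hα : α ∈ A.M) (hβ : β ∈ A.M) (hγ : γ ∈ A.M)
    (hcomm : Commutes α β)
    (hZ : {x : X | γ x = 0} = {x : X | α x = 0} ∩ {x : X | β x = 0}) :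
    {x : X | α x = x} ∪ {x : X | β x = x} ⊆ {x : X | γ x = x} := by
  obtain ⟨ν, hν, hν1, hν2⟩ := A.negation γ hγ
  have key : ∀ δ, δ ∈ A.M → (∀ y : X, γ y = 0 → δ y = 0) → ∀ x : X, δ x = x → γ x = x := by
    intro δ hδ hzero x hx
    have hfix : ν (ν x) = ν x := A.idempotence ν hν x
    have hγν : γ (ν x) = 0 := (hν1 (ν x)).mp hfix
    have hδν : δ (ν x) = 0 := hzero _ hγν
    have h1 : ν (δ (ν x)) = δ (ν x) := by rw [hδν, A.illegitimate ν hν]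
    have h2 : δ (ν x) = ν x := A.interference δ hδ ν hν x hx h1
    exact (hν2 x).mp (h2 ▸ hδν)
  rintro x (hx | hx)
  · exact key α hα (fun y hy => ((Set.ext_iff.mp hZ y).mp hy).1) x hx
  · exact key β hβ (fun y hy => ((Set.ext_iff.mp hZ y).mp hy).2) x hx
end

section
/- In any M-algebra (X, M), suppose α, β ∈ M commute, ν ∈ M is a negation of β, and μ ∈ M is a negation of the composite map x ↦ ν(α(x)) (which belongs to M). Then FP(μ) = {x ∈ X : α(x) ∈ FP(β)}, i.e., μ(x) = x if and only if β(α(x)) = α(x); moreover μ is the unique element of M with this fixpoint set. (μ is the implication α → β.) -/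
theorem malgebra_implication {X : Type*} [Zero X] (A : MAlgebra X)
    {α β ν μ : X → X} (hα : α ∈ A.M) (hβ : β ∈ A.M)
    (hν : ν ∈ A.M) (hμ : μ ∈ A.M)
    (hcomm : Commutes α β)
    (hnegν : IsNegation ν β)
    (hnegμ : IsNegation μ (fun x => ν (α x))) :
    (fun x => ν (α x)) ∈ A.M ∧
    {x : X | μ x = x} = {x : X | β (α x) = α x} ∧
    ∀ γ ∈ A.M, {x : X | γ x = x} = {x : X | β (α x) = α x} → γ = μ := by
  have hpre : Preserves ν α := by
    intro x hx
    apply A.interference α hα ν hν x hx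
    have h1 : β (ν x) = 0 := (hnegν.1 (ν x)).mp (A.idempotence ν hν x)
    have h2 : β (α (ν x)) = 0 := by
      rw [← hcomm, h1, A.illegitimate α hα]
    exact (hnegν.1 (α (ν x))).mpr h2
  have hmem : (fun x => ν (α x)) ∈ A.M := A.composition ν hν α hα hpre
  have hfp : {x : X | μ x = x} = {x : X | β (α x) = α x} := by
    ext x
    simp only [Set.mem_setOf_eq]
    rw [hnegμ.1 x, hnegν.2 (α x)]
  refine ⟨hmem, hfp, ?_⟩
  intro γ hγ hγfp
  have hsame : ∀ x, γ x = x ↔ μ x = x := by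
    intro x
    have h1 : (γ x = x) = (x ∈ {x : X | γ x = x}) := rfl
    have h2 : (μ x = x) = (x ∈ {x : X | μ x = x}) := rfl
    rw [h1, h2, hγfp, hfp]
  funext x
  apply A.cumulativity γ hγ μ hμ x
  · exact (hsame (γ x)).mp (A.idempotence γ hγ x)
  · exact (hsame (μ x)).mpr (A.idempotence μ hμ x)
end

section
/- In any M-algebra (X, M), let α, β ∈ M commute, let ν_α ∈ M be a negation of α and ν_β ∈ M a negation of β. Suppose γ₁ ∈ M satisfies FP(γ₁) = {x : ν_β(x) ∈ FP(ν_α)} (γ₁ is ¬β → ¬α), γ₂ ∈ M satisfies FP(γ₂) = {x : ν_β(x) ∈ FP(α)} (γ₂ is ¬β → α), γ₃ ∈ M satisfies FP(γ₃) = {x : γ₂(x) ∈ FP(β)} (γ₃ is γ₂ → β), and γ₄ ∈ M satisfies FP(γ₄) = {x : γ₁(x) ∈ FP(γ₃)} (γ₄ is γ₁ → γ₃). Then γ₄(x) = x for every x ∈ X; that is, the axiom scheme (¬β → ¬α) → ((¬β → α) → β) holds at every state. -/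
theorem malgebra_mendelson_scheme3 {X : Type*} [Zero X] (A : MAlgebra X)
    {α β να νβ γ₁ γ₂ γ₃ γ₄ : X → X}
    (hα : α ∈ A.M) (hβ : β ∈ A.M) (hνα : να ∈ A.M) (hνβ : νβ ∈ A.M)
    (hγ₁ : γ₁ ∈ A.M) (hγ₂ : γ₂ ∈ A.M) (hγ₃ : γ₃ ∈ A.M) (hγ₄ : γ₄ ∈ A.M)
    (hcomm : Commutes α β)
    (hnegα : IsNegation να α) (hnegβ : IsNegation νβ β)
    (hFP₁ : {x : X | γ₁ x = x} = {x : X | να (νβ x) = νβ x})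
    (hFP₂ : {x : X | γ₂ x = x} = {x : X | α (νβ x) = νβ x})
    (hFP₃ : {x : X | γ₃ x = x} = {x : X | β (γ₂ x) = γ₂ x})
    (hFP₄ : {x : X | γ₄ x = x} = {x : X | γ₃ (γ₁ x) = γ₁ x}) :
    ∀ x : X, γ₄ x = x := by
  have h1 : ∀ x, γ₁ x = x ↔ να (νβ x) = νβ x := fun x => Set.ext_iff.mp hFP₁ x
  have h2 : ∀ x, γ₂ x = x ↔ α (νβ x) = νβ x := fun x => Set.ext_iff.mp hFP₂ x
  have h3 : ∀ x, γ₃ x = x ↔ β (γ₂ x) = γ₂ x := fun x => Set.ext_iff.mp hFP₃ x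
  have h4 : ∀ x, γ₄ x = x ↔ γ₃ (γ₁ x) = γ₁ x := fun x => Set.ext_iff.mp hFP₄ x
  have idβ := A.idempotence β hβ
  have idνα := A.idempotence να hνα
  have idνβ := A.idempotence νβ hνβ
  have idγ₁ := A.idempotence γ₁ hγ₁
  have idγ₂ := A.idempotence γ₂ hγ₂
  have zβ := A.illegitimate β hβ
  have zνα := A.illegitimate να hνα
  have zνβ := A.illegitimate νβ hνβ
  have zγ₂ := A.illegitimate γ₂ hγ₂
  -- α ∘ να = 0
  have ανα : ∀ x, α (να x) = 0 := fun x => (hnegα.1 (να x)).mp (idνα x)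
  -- P1 : να preserves β
  have P1 : ∀ x, β x = x → β (να x) = να x := by
    intro x hx
    have ht : α (β (να x)) = 0 := by rw [hcomm, ανα, zβ]
    exact A.interference β hβ να hνα x hx ((hnegα.1 _).mpr ht)
  -- P2 : β preserves να
  have P2 : ∀ x, να x = x → να (β x) = β x := by
    intro x hx
    have hαx : α x = 0 := (hnegα.1 x).mp hx
    exact (hnegα.1 _).mpr (by rw [hcomm, hαx, zβ])
  have hg : (fun x => β (να x)) ∈ A.M := A.composition β hβ να hνα P2
  have hh : (fun x => να (β x)) ∈ A.M := A.composition να hνα β hβ P1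
  -- β and να commute
  have cβνα : ∀ x, β (να x) = να (β x) := by
    intro x
    have c1 : να (β (β (να x))) = β (να x) := by
      rw [idβ]
      exact (hnegα.1 _).mpr (by rw [hcomm, ανα, zβ])
    have c2 : β (να (να (β x))) = να (β x) := by
      rw [idνα]
      exact P1 (β x) (idβ x)
    exact A.cumulativity _ hg _ hh x c1 c2
  -- δ := να ∘ νβ ∈ M
  have Pδ : Preserves να νβ := by
    intro x hx
    have hβx : β x = 0 := (hnegβ.1 x).mp hx
    exact (hnegβ.1 _).mpr (by rw [cβνα, hβx, zνα])
  have hδ : (fun x => να (νβ x)) ∈ A.M := A.composition να hνα νβ hνβ Pδ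
  -- σ := νβ ∘ γ₂ ∈ M
  have Pσ : Preserves νβ γ₂ := by
    intro x hx
    exact (h2 (νβ x)).mpr (by rw [idνβ]; exact (h2 x).mp hx)
  have hσ : (fun x => νβ (γ₂ x)) ∈ A.M := A.composition νβ hνβ γ₂ hγ₂ Pσ
  -- τ := γ₂ ∘ νβ ∈ M
  have Pτ : Preserves γ₂ νβ := by
    intro x hx
    have hfix : γ₂ (νβ (γ₂ x)) = νβ (γ₂ x) :=
      (h2 _).mpr (by rw [idνβ]; exact (h2 (γ₂ x)).mp (idγ₂ x))
    exact A.interference νβ hνβ γ₂ hγ₂ x hx hfix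
  have hτ : (fun x => γ₂ (νβ x)) ∈ A.M := A.composition γ₂ hγ₂ νβ hνβ Pτ
  -- main argument
  intro x₀
  set y := γ₁ x₀ with hy_def
  have hy : να (νβ y) = νβ y := (h1 y).mp (idγ₁ x₀)
  -- w := νβ y is a fixpoint of δ
  have hδw : να (νβ (νβ y)) = νβ y := by rw [idνβ]; exact hy
  -- δ (γ₂ w) = 0
  have hδγ₂w : να (νβ (γ₂ (νβ y))) = 0 :=
    (hnegα.2 _).mpr ((h2 _).mp (idγ₂ (νβ y)))
  have cond : γ₂ (να (νβ (γ₂ (νβ y)))) = να (νβ (γ₂ (νβ y))) := by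
    rw [hδγ₂w]; exact zγ₂
  have hint : να (νβ (γ₂ (νβ y))) = γ₂ (νβ y) :=
    A.interference _ hδ γ₂ hγ₂ (νβ y) hδw cond
  have hγ₂w : γ₂ (νβ y) = 0 := by rw [← hint, hδγ₂w]
  -- cumulativity on σ, τ at y
  have hαu : α (νβ (γ₂ y)) = νβ (γ₂ y) := (h2 _).mp (idγ₂ y)
  have hγ₂u : γ₂ (νβ (γ₂ y)) = νβ (γ₂ y) :=
    (h2 _).mpr (by rw [idνβ]; exact hαu)
  have c1 : γ₂ (νβ (νβ (γ₂ y))) = νβ (γ₂ y) := by rw [idνβ]; exact hγ₂u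
  have c2 : νβ (γ₂ (γ₂ (νβ y))) = γ₂ (νβ y) := by rw [idγ₂, hγ₂w]; exact zνβ
  have hcum : νβ (γ₂ y) = γ₂ (νβ y) := A.cumulativity _ hσ _ hτ y c1 c2
  have hu0 : νβ (γ₂ y) = 0 := by rw [hcum, hγ₂w]
  have hβz : β (γ₂ y) = γ₂ y := (hnegβ.2 _).mp hu0
  exact (h4 x₀).mpr ((h3 y).mpr hβz)
end

section
/- In a separable M-algebra (X, M), a measurement α ∈ M is classical (i.e., for every x ∈ X, either α(x) = x or α(x) = 0) if and only if α commutes with every β ∈ M. -/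
theorem malgebra_classical_iff_commutes {X : Type*} [Zero X] (A : MAlgebra X)
    (hsep : ∀ x y : X, x ≠ 0 → y ≠ 0 → x ≠ y → ∃ α ∈ A.M, α x = x ∧ α y ≠ y)
    {α : X → X} (hα : α ∈ A.M) :
    (∀ x : X, α x = x ∨ α x = 0) ↔ ∀ β ∈ A.M, Commutes α β := by
  constructor
  · intro hcl β hβ x
    rcases hcl x with hx | hx
    · -- α x = x
      have h1 : α (β x) = β x := by
        apply A.interference α hα β hβ x hx
        rcases hcl (β x) with h | h
        · rw [h]; exact A.idempotence β hβ x
        · rw [h]; rw [A.illegitimate β hβ]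
      rw [h1, hx]
    · -- α x = 0
      obtain ⟨ν, hν, hν1, hν2⟩ := A.negation α hα
      have hνx : ν x = x := (hν1 x).mpr hx
      rcases hcl (β x) with h | h
      · -- α (β x) = β x, show β x = 0
        have hν0 : ν (β x) = 0 := (hν2 (β x)).mpr h
        have := A.interference ν hν β hβ x hνx (by rw [hν0, A.illegitimate β hβ])
        have hβx0 : β x = 0 := by rw [← this, hν0]
        rw [hβx0, hx, A.illegitimate α hα, A.illegitimate β hβ]
      · rw [h, hx, A.illegitimate β hβ]
  · intro hcom x
    by_contra hc
    push_neg at hc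
    obtain ⟨h1, h2⟩ := hc
    have hx0 : x ≠ 0 := by
      intro h; apply h2; rw [h, A.illegitimate α hα]
    obtain ⟨β, hβ, hβ1, hβ2⟩ := hsep x (α x) hx0 h2 (fun h => h1 h.symm)
    apply hβ2
    have := hcom β hβ x
    rw [hβ1] at this
    exact this.symm
end

section
/- In any M-algebra (X, M), suppose α, β ∈ M satisfy FP(α) ⊆ FP(β) and ν ∈ M is a negation of α. Then the composite map γ : x ↦ β(ν(x)) belongs to M, and Z(β) = Z(α) ∩ Z(γ); that is, β is the least upper bound (disjunction) of α and the conjunction ¬α ∧ β, which is the orthomodular law for the partial order α ≤ β defined by FP(α) ⊆ FP(β). -/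
theorem malgebra_orthomodular {X : Type*} [Zero X] (A : MAlgebra X)
    {α β ν : X → X} (hα : α ∈ A.M) (hβ : β ∈ A.M) (hν : ν ∈ A.M)
    (hle : {x : X | α x = x} ⊆ {x : X | β x = x})
    (hneg : IsNegation ν α) :
    (fun x => β (ν x)) ∈ A.M ∧
    {x : X | β x = 0} = {x : X | α x = 0} ∩ {x : X | β (ν x) = 0} := by
  -- β fixes every value of α
  have hfix : ∀ x, β (α x) = α x := fun x => hle (A.idempotence α hα x)
  -- τ = α ∘ β ∈ M
  have hτ : (fun x => α (β x)) ∈ A.M :=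
    A.composition α hα β hβ (fun x _ => hfix x)
  -- key: α (β x) = α x for all x, by cumulativity applied to α and τ
  have key : ∀ x, α (β x) = α x := by
    intro x
    have h1 : (fun x => α (β x)) (α x) = α x := by
      simp only; rw [hfix x, A.idempotence α hα]
    have h2 : α ((fun x => α (β x)) x) = (fun x => α (β x)) x := by
      simp only; rw [A.idempotence α hα]
    exact (A.cumulativity α hα _ hτ x h1 h2).symm
  constructor
  · -- β ∘ ν ∈ M since β preserves ν
    refine A.composition β hβ ν hν (fun x hx => ?_)
    have hα0 : α x = 0 := (hneg.1 x).mp hx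
    have : α (β x) = 0 := by rw [key x, hα0]
    exact (hneg.1 (β x)).mpr this
  · ext x
    simp only [Set.mem_setOf_eq, Set.mem_inter_iff]
    constructor
    · intro hb
      have hα0 : α x = 0 := by rw [← key x, hb, A.illegitimate α hα]
      have hνx : ν x = x := (hneg.1 x).mpr hα0
      exact ⟨hα0, by rw [hνx, hb]⟩
    · rintro ⟨hα0, hγ⟩
      have hνx : ν x = x := (hneg.1 x).mpr hα0
      rw [← hνx]; exact hγ
end
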